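/- Let G be a twin-free graph and suppose s is a vertex such that s = f(u→v) for some arc u→v of H(G) (i.e., N[v] = N[u] ∪ {s}). Then s has at most one in-neighbour in H(G), where H(G) is the directed graph with arcs a→b whenever N[b] = N[a] ∪ {x} for some x. -/
import Mathlib


open SimpleGraph

variable {V : Type*}

/-- Closed neighbourhood of a vertex. -/
def closedNbhd (G : SimpleGraph V) (v : V) : Set V := insert v (G.neighborSet v)

/-- `C` is a dominating set of `G`. -/
def Dominating (G : SimpleGraph V) (C : Set V) : Prop :=
  ∀ v, v ∉ C → ∃ u ∈ C, G.Adj v u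

/-- `C` is a separating set of `G`. -/
def Separating (G : SimpleGraph V) (C : Set V) : Prop :=
  ∀ u v : V, u ≠ v → closedNbhd G u ∩ C ≠ closedNbhd G v ∩ C

/-- `C` is an identifying code of `G`. -/
def IdCode (G : SimpleGraph V) (C : Set V) : Prop :=
  Dominating G C ∧ Separating G C

/-- `G` has no pair of twins. -/
def TwinFree (G : SimpleGraph V) : Prop :=
  ∀ u v : V, u ≠ v → closedNbhd G u ≠ closedNbhd G v

/-- Arc of the auxiliary directed graph $\mathcal H(G)$. -/
def HasArc (G : SimpleGraph V) (u v : V) : Prop :=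
  ∃ x, x ∉ closedNbhd G u ∧ closedNbhd G v = insert x (closedNbhd G u)


lemma mem_closedNbhd_comm (G : SimpleGraph V) {a b : V} :
    a ∈ closedNbhd G b ↔ b ∈ closedNbhd G a := by
  simp only [closedNbhd, Set.mem_insert_iff, mem_neighborSet]
  constructor
  · rintro (h | h)
    · exact Or.inl h.symm
    · exact Or.inr h.symm
  · rintro (h | h)
    · exact Or.inl h.symm
    · exact Or.inr h.symm

lemma self_mem_closedNbhd (G : SimpleGraph V) (a : V) : a ∈ closedNbhd G a :=
  Set.mem_insert _ _

/-- For any in-neighbour `t` of `s` with witness `x`, in the presence of `s = f(u→v)`,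
the witness must be `v`. -/
lemma witness_eq (G : SimpleGraph V) (u v s : V)
    (hs : s ∉ closedNbhd G u)
    (huv : closedNbhd G v = insert s (closedNbhd G u))
    (t x : V) (hx : x ∉ closedNbhd G t)
    (hts : closedNbhd G s = insert x (closedNbhd G t)) : x = v := by
  -- u ∉ N[s]
  have hus : u ∉ closedNbhd G s := fun h => hs ((mem_closedNbhd_comm G).mp h)
  -- v ∈ N[s]
  have hsv : s ∈ closedNbhd G v := by
    rw [huv]; exact Set.mem_insert _ _
  have hvs : v ∈ closedNbhd G s := (mem_closedNbhd_comm G).mp hsv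
  rw [hts] at hvs
  rcases hvs with h | h
  · exact h.symm
  · -- v ∈ N[t], so t ∈ N[v] = N[u] ∪ {s}
    exfalso
    have htv : t ∈ closedNbhd G v := (mem_closedNbhd_comm G).mp h
    rw [huv] at htv
    rcases htv with h' | h'
    · -- t = s : then x ∈ N[s] = insert x N[t] but x ∉ N[t]=N[s]
      subst h'
      have : x ∈ closedNbhd G t := by rw [hts]; exact Set.mem_insert _ _
      exact hx this
    · -- t ∈ N[u], so u ∈ N[t] ⊆ N[s], contradiction with hus
      have hut : u ∈ closedNbhd G t := (mem_closedNbhd_comm G).mp h'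
      apply hus
      rw [hts]
      exact Set.mem_insert_of_mem _ hut

theorem stmt10 (G : SimpleGraph V) (hTF : TwinFree G) (u v s : V)
    (hs : s ∉ closedNbhd G u)
    (huv : closedNbhd G v = insert s (closedNbhd G u))
    (t t' : V) (ht : HasArc G t s) (ht' : HasArc G t' s) :
    t = t' := by
  obtain ⟨x, hx, hts⟩ := ht
  obtain ⟨x', hx', hts'⟩ := ht'
  have hxv : x = v := witness_eq G u v s hs huv t x hx hts
  have hx'v : x' = v := witness_eq G u v s hs huv t' x' hx' hts'
  rw [hxv] at hx hts
  rw [hx'v] at hx' hts'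
  by_contra hne
  apply hTF t t' hne
  have h : insert v (closedNbhd G t) = insert v (closedNbhd G t') := by
    rw [← hts, ← hts']
  ext a
  constructor
  · intro ha
    have : a ∈ insert v (closedNbhd G t') := h ▸ Set.mem_insert_of_mem _ ha
    rcases this with rfl | h'
    · exact absurd ha hx
    · exact h'
  · intro ha
    have : a ∈ insert v (closedNbhd G t) := h ▸ Set.mem_insert_of_mem _ ha
    rcases this with rfl | h'
    · exact absurd ha hx'
    · exact h'
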